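/- arXiv:2408.03757 — 3 statements merged into one kernel-verified Lean document; each statement's English description precedes it below -/
import Mathlib

section
/- For the (7,10)-gadget conversion of a 3-SAT clause Ω = (a ∨ b ∨ c) into the ten 2-SAT clauses {(a), (b), (c), (d), (¬a ∨ ¬b), (¬a ∨ ¬c), (¬b ∨ ¬c), (a ∨ ¬d), (b ∨ ¬d), (c ∨ ¬d)} with ancillary Boolean variable d: for every assignment of a, b, c satisfying Ω, the maximum over d ∈ {false, true} of the number of satisfied clauses among the ten is exactly 7; and for every assignment not satisfying Ω, this maximum is exactly 6. -/
def gadgetCount (a b c d : Bool) : ℕ :=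
  [a, b, c, d, !a || !b, !a || !c, !b || !c, a || !d, b || !d, c || !d].count true

theorem gadget_max_count (a b c : Bool) :
    ((a || b || c) = true → max (gadgetCount a b c false) (gadgetCount a b c true) = 7) ∧
    ((a || b || c) = false → max (gadgetCount a b c false) (gadgetCount a b c true) = 6) := by
  cases a <;> cases b <;> cases c <;> simp [gadgetCount] <;> decide
end

section
/- There do not exist real constants A, B, C, D, E, F, G, H, I, J such that the quadratic polynomial p(σ₁, σ₂, y) = Bσ₁ + Cσ₂ + Dy + Aσ₁σ₂ + Eσ₁y + Fσ₂y + Gy² + Hσ₁² + Iσ₂² + J is non-negative on {−1,1}³ and vanishes exactly on the set {(σ₁, σ₂, y) ∈ {−1,1}³ : σ₁σ₂ = y}. -/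
theorem no_quadratic_penalty :
    ¬ ∃ A B C D E F G H I J : ℝ,
      ∀ σ₁ σ₂ y : ℝ, σ₁ ∈ ({-1, 1} : Set ℝ) → σ₂ ∈ ({-1, 1} : Set ℝ) →
        y ∈ ({-1, 1} : Set ℝ) →
        (0 ≤ B * σ₁ + C * σ₂ + D * y + A * (σ₁ * σ₂) + E * (σ₁ * y) + F * (σ₂ * y) +
            G * y ^ 2 + H * σ₁ ^ 2 + I * σ₂ ^ 2 + J) ∧
        ((B * σ₁ + C * σ₂ + D * y + A * (σ₁ * σ₂) + E * (σ₁ * y) + F * (σ₂ * y) +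
            G * y ^ 2 + H * σ₁ ^ 2 + I * σ₂ ^ 2 + J = 0) ↔ σ₁ * σ₂ = y) := by
  rintro ⟨A, B, C, D, E, F, G, H, I, J, h⟩
  have m1 : (-1 : ℝ) ∈ ({-1, 1} : Set ℝ) := by left; rfl
  have p1 : (1 : ℝ) ∈ ({-1, 1} : Set ℝ) := by right; rfl
  have h1 := h 1 1 1 p1 p1 p1
  have h2 := h 1 (-1) (-1) p1 m1 m1
  have h3 := h (-1) 1 (-1) m1 p1 m1
  have h4 := h (-1) (-1) 1 m1 m1 p1
  have h5 := h 1 1 (-1) p1 p1 m1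
  have h6 := h 1 (-1) 1 p1 m1 p1
  have h7 := h (-1) 1 1 m1 p1 p1
  have h8 := h (-1) (-1) (-1) m1 m1 m1
  have e1 := h1.2.mpr (by norm_num)
  have e2 := h2.2.mpr (by norm_num)
  have e3 := h3.2.mpr (by norm_num)
  have e4 := h4.2.mpr (by norm_num)
  have n5 : ¬ ((1:ℝ) * 1 = -1) := by norm_num
  have g5 := lt_of_le_of_ne h5.1 (fun hc => n5 (h5.2.mp hc.symm))
  have g6 := lt_of_le_of_ne h6.1 (fun hc => (by norm_num : ¬ ((1:ℝ) * (-1) = 1)) (h6.2.mp hc.symm))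
  have g7 := lt_of_le_of_ne h7.1 (fun hc => (by norm_num : ¬ ((-1:ℝ) * 1 = 1)) (h7.2.mp hc.symm))
  have g8 := lt_of_le_of_ne h8.1 (fun hc => (by norm_num : ¬ ((-1:ℝ) * (-1) = -1)) (h8.2.mp hc.symm))
  nlinarith [e1, e2, e3, e4, g5, g6, g7, g8]
end

section
/- Let a 3-SAT instance with M clauses be converted via the (7,10)-gadget. For any Boolean assignment of the original variables, extended to the ancillary variables by choosing each dᵏ optimally (maximizing satisfied gadget clauses per original clause), the total number of satisfied Max 2-SAT clauses equals 7·S + 6·(M − S), where S is the number of satisfied clauses of the original 3-SAT instance under that assignment. In particular, maximizing satisfied Max 2-SAT clauses is equivalent to maximizing satisfied 3-SAT clauses. -/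
lemma gadget_max (a b c : Bool) :
    max (gadgetCount a b c false) (gadgetCount a b c true) =
      6 + (if (a || b || c) then 1 else 0) := by
  cases a <;> cases b <;> cases c <;> decide

theorem gadget_total_optimal (M : ℕ) (a b c : Fin M → Bool) :
    (∑ k : Fin M,
        max (gadgetCount (a k) (b k) (c k) false) (gadgetCount (a k) (b k) (c k) true)) =
      7 * (Finset.univ.filter (fun k => a k || b k || c k)).card +
        6 * (M - (Finset.univ.filter (fun k => a k || b k || c k)).card) := by
  have hS : (Finset.univ.filter (fun k => a k || b k || c k)).card ≤ M := by
    simpa using (Finset.card_filter_le Finset.univ (fun k => a k || b k || c k))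
  calc (∑ k : Fin M,
        max (gadgetCount (a k) (b k) (c k) false) (gadgetCount (a k) (b k) (c k) true))
      = ∑ k : Fin M, (6 + (if (a k || b k || c k) then 1 else 0)) := by
        simp only [gadget_max]
    _ = 6 * M + (Finset.univ.filter (fun k => a k || b k || c k)).card := by
        rw [Finset.sum_add_distrib, Finset.sum_const, Finset.card_filter]
        simp [mul_comm]
    _ = 7 * (Finset.univ.filter (fun k => a k || b k || c k)).card +
        6 * (M - (Finset.univ.filter (fun k => a k || b k || c k)).card) := by omega
end
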